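/- Let 1 < p < ∞, 0 < s < 1, and let Ω ⊂ ℝ^N be an open convex cone with vertex x₀ (i.e. x₀ + τ(x - x₀) ∈ Ω for all x ∈ Ω, τ > 0). Assume that for every R > 0 and every u ∈ C_0^∞(Ω ∩ B_R(x₀)), the interpolation norm satisfies ‖u‖_{X_0^{s,p}(Ω ∩ B_R(x₀))}^p ≤ C(N, p, E(Ω ∩ B_R(x₀))) [u]_{W^{s,p}(ℝ^N)}^p. Then for every u ∈ C_0^∞(Ω), ‖u‖_{X_0^{s,p}(Ω)}^p ≤ C(N, p, E(Ω ∩ B_1(x₀))) [u]_{W^{s,p}(ℝ^N)}^p, where E(A) = diam(A)/(2 R_A) is the eccentricity (R_A the inradius). The key geometric fact is that E(Ω ∩ B_R(x₀)) = E(Ω ∩ B_1(x₀)) for every R > 0. -/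

import Mathlib

open MeasureTheory Metric Filter
open scoped Pointwise Topology NNReal

noncomputable section

abbrev Euc (N : ℕ) := EuclideanSpace ℝ (Fin N)

/-- `u ∈ C_0^∞(Ω)`: smooth, compactly supported, with support inside `Ω`. -/
def IsTestFn {N : ℕ} (Ω : Set (Euc N)) (u : Euc N → ℝ) : Prop :=
  ContDiff ℝ (⊤ : ℕ∞) u ∧ HasCompactSupport u ∧ tsupport u ⊆ Ω

/-- The `L^p` norm of `u`. -/
def lpNorm {N : ℕ} (p : ℝ) (u : Euc N → ℝ) : ℝ := (∫ x, |u x| ^ p) ^ (1/p)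

/-- The `L^p` norm of the gradient of `u`. -/
def gradLpNorm {N : ℕ} (p : ℝ) (u : Euc N → ℝ) : ℝ := (∫ x, ‖fderiv ℝ u x‖ ^ p) ^ (1/p)

/-- Gagliardo–Slobodeckiĭ seminorm to the power `p`, double integral over `A × A`. -/
def gagliardoOn {N : ℕ} (A : Set (Euc N)) (s p : ℝ) (u : Euc N → ℝ) : ℝ :=
  ∫ x in A, ∫ y in A, |u x - u y| ^ p / ‖x - y‖ ^ ((N : ℝ) + s * p)

/-- Gagliardo–Slobodeckiĭ seminorm to the power `p`, over `ℝ^N × ℝ^N`. -/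
def gagliardo {N : ℕ} (s p : ℝ) (u : Euc N → ℝ) : ℝ :=
  ∫ x, ∫ y, |u x - u y| ^ p / ‖x - y‖ ^ ((N : ℝ) + s * p)

/-- The `K`-functional between `L^p(Ω)` and `D_0^{1,p}(Ω)`. -/
def Kfun {N : ℕ} (Ω : Set (Euc N)) (p t : ℝ) (u : Euc N → ℝ) : ℝ :=
  sInf { r | ∃ v, IsTestFn Ω v ∧ r = lpNorm p (u - v) + t * gradLpNorm p v }

/-- The `p`-th power of the real interpolation norm of parameters `(s,p)`. -/
def interpNormP {N : ℕ} (Ω : Set (Euc N)) (s p : ℝ) (u : Euc N → ℝ) : ℝ :=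
  ∫ t in Set.Ioi (0:ℝ), t ^ (-(s*p)) * (Kfun Ω p t u) ^ p / t

/-- Sharp Poincaré constant `λ_p^1(Ω)`. -/
def lam1 {N : ℕ} (Ω : Set (Euc N)) (p : ℝ) : ℝ :=
  sInf { r | ∃ u, IsTestFn Ω u ∧ lpNorm p u = 1 ∧ r = (gradLpNorm p u) ^ p }

/-- Sharp fractional Poincaré constant `λ_p^s(Ω)`. -/
def lamS {N : ℕ} (Ω : Set (Euc N)) (s p : ℝ) : ℝ :=
  sInf { r | ∃ u, IsTestFn Ω u ∧ lpNorm p u = 1 ∧ r = gagliardo s p u }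

/-- Sharp interpolation Poincaré constant `Λ_p^s(Ω)`. -/
def LamS {N : ℕ} (Ω : Set (Euc N)) (s p : ℝ) : ℝ :=
  sInf { r | ∃ u, IsTestFn Ω u ∧ lpNorm p u = 1 ∧ r = interpNormP Ω s p u }

/-- Fractional `(s,p)`-capacity of a set `F ⊂ ℝ^N`. -/
def capSP {N : ℕ} (s p : ℝ) (F : Set (Euc N)) : ℝ :=
  sInf { r | ∃ u : Euc N → ℝ, ContDiff ℝ (⊤ : ℕ∞) u ∧ HasCompactSupport u ∧
    (∀ x, 0 ≤ u x) ∧ (∀ x ∈ F, 1 ≤ u x) ∧ r = gagliardo s p u }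

/-- Volume of the unit ball of `ℝ^N`. -/
def omegaN (N : ℕ) : ℝ := (volume (Metric.ball (0 : Euc N) 1)).toReal

/-- The inradius of a set: radius of the largest open ball inscribed in it. -/
def inrad {N : ℕ} (A : Set (Euc N)) : ℝ := sSup {r : ℝ | ∃ x, Metric.ball x r ⊆ A}

/-- The eccentricity `E(A) = diam(A) / (2 R_A)`. -/
def ecc {N : ℕ} (A : Set (Euc N)) : ℝ := Metric.diam A / (2 * inrad A)

section Aux

variable {N : ℕ}

lemma isTestFn_zero (A : Set (Euc N)) : IsTestFn A (0 : Euc N → ℝ) := by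
  refine ⟨contDiff_const, ?_, ?_⟩
  · rw [HasCompactSupport]
    simp [tsupport]
  · simp [tsupport]

lemma isTestFn_mono {A B : Set (Euc N)} (h : A ⊆ B) {u : Euc N → ℝ}
    (hu : IsTestFn A u) : IsTestFn B u :=
  ⟨hu.1, hu.2.1, hu.2.2.trans h⟩

lemma lpNorm_nonneg (p : ℝ) (u : Euc N → ℝ) : 0 ≤ lpNorm p u :=
  Real.rpow_nonneg (integral_nonneg fun x => Real.rpow_nonneg (abs_nonneg _) _) _

lemma gradLpNorm_nonneg (p : ℝ) (u : Euc N → ℝ) : 0 ≤ gradLpNorm p u :=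
  Real.rpow_nonneg (integral_nonneg fun x => Real.rpow_nonneg (norm_nonneg _) _) _

lemma lpNorm_zero {p : ℝ} (hp : p ≠ 0) : lpNorm p (0 : Euc N → ℝ) = 0 := by
  simp [_root_.lpNorm, Real.zero_rpow hp, Real.zero_rpow (one_div_ne_zero hp), Real.zero_rpow (inv_ne_zero hp)]

lemma gradLpNorm_zero {p : ℝ} (hp : p ≠ 0) : gradLpNorm p (0 : Euc N → ℝ) = 0 := by
  have h0 : ∀ x : Euc N, fderiv ℝ (0 : Euc N → ℝ) x = 0 := by
    intro x
    have : (0 : Euc N → ℝ) = fun _ => (0 : ℝ) := rfl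
    rw [this]
    exact fderiv_const_apply _
  simp [gradLpNorm, h0, Real.zero_rpow hp, Real.zero_rpow (one_div_ne_zero hp), Real.zero_rpow (inv_ne_zero hp)]

lemma Kfun_setOf_nonneg {A : Set (Euc N)} {p t : ℝ} {u : Euc N → ℝ} (ht : 0 ≤ t) :
    ∀ r ∈ { r | ∃ v, IsTestFn A v ∧ r = lpNorm p (u - v) + t * gradLpNorm p v }, 0 ≤ r := by
  rintro r ⟨v, hv, rfl⟩
  exact add_nonneg (lpNorm_nonneg _ _) (mul_nonneg ht (gradLpNorm_nonneg _ _))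

lemma Kfun_bddBelow {A : Set (Euc N)} {p t : ℝ} {u : Euc N → ℝ} (ht : 0 ≤ t) :
    BddBelow { r | ∃ v, IsTestFn A v ∧ r = lpNorm p (u - v) + t * gradLpNorm p v } :=
  ⟨0, fun r hr => Kfun_setOf_nonneg ht r hr⟩

lemma Kfun_setOf_nonempty (A : Set (Euc N)) (p t : ℝ) (u : Euc N → ℝ) :
    Set.Nonempty { r | ∃ v, IsTestFn A v ∧ r = lpNorm p (u - v) + t * gradLpNorm p v } :=
  ⟨_, 0, isTestFn_zero A, rfl⟩

lemma Kfun_nonneg {A : Set (Euc N)} {p t : ℝ} {u : Euc N → ℝ} (ht : 0 ≤ t) :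
    0 ≤ Kfun A p t u :=
  Real.sInf_nonneg (Kfun_setOf_nonneg ht)

lemma Kfun_le {A : Set (Euc N)} {p t : ℝ} {u v : Euc N → ℝ} (ht : 0 ≤ t)
    (hv : IsTestFn A v) : Kfun A p t u ≤ lpNorm p (u - v) + t * gradLpNorm p v :=
  csInf_le (Kfun_bddBelow ht) ⟨v, hv, rfl⟩

lemma Kfun_mono {A : Set (Euc N)} {p : ℝ} {u : Euc N → ℝ} {t₁ t₂ : ℝ}
    (ht₁ : 0 ≤ t₁) (h : t₁ ≤ t₂) : Kfun A p t₁ u ≤ Kfun A p t₂ u := by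
  refine le_csInf (Kfun_setOf_nonempty A p t₂ u) ?_
  rintro r ⟨v, hv, rfl⟩
  refine (Kfun_le ht₁ hv).trans ?_
  exact add_le_add le_rfl (mul_le_mul_of_nonneg_right h (gradLpNorm_nonneg _ _))

lemma Kfun_anti_set {A B : Set (Euc N)} (hAB : A ⊆ B) {p t : ℝ} {u : Euc N → ℝ}
    (ht : 0 ≤ t) : Kfun B p t u ≤ Kfun A p t u := by
  refine le_csInf (Kfun_setOf_nonempty A p t u) ?_
  rintro r ⟨v, hv, rfl⟩
  exact csInf_le (Kfun_bddBelow ht) ⟨v, isTestFn_mono hAB hv, rfl⟩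

lemma Kfun_le_lpNorm {A : Set (Euc N)} {p t : ℝ} {u : Euc N → ℝ} (hp : p ≠ 0)
    (ht : 0 ≤ t) : Kfun A p t u ≤ lpNorm p u := by
  have := Kfun_le (A := A) (p := p) (u := u) ht (isTestFn_zero A)
  rwa [sub_zero, gradLpNorm_zero hp, mul_zero, add_zero] at this

lemma Kfun_le_grad {A : Set (Euc N)} {p t : ℝ} {u : Euc N → ℝ} (hp : p ≠ 0)
    (ht : 0 ≤ t) (hu : IsTestFn A u) : Kfun A p t u ≤ t * gradLpNorm p u := by
  have := Kfun_le (A := A) (p := p) (u := u) ht hu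
  rwa [sub_self, lpNorm_zero hp, zero_add] at this

lemma interp_aesm (A : Set (Euc N)) (s p : ℝ) (hp : 0 < p) (u : Euc N → ℝ) :
    AEStronglyMeasurable (fun t : ℝ => t ^ (-(s*p)) * (Kfun A p t u) ^ p / t)
      (volume.restrict (Set.Ioi (0:ℝ))) := by
  have hKmono : Monotone (fun t : ℝ => Kfun A p (max t 0) u) := by
    intro a b hab
    exact Kfun_mono (le_max_right _ _) (max_le_max hab le_rfl)
  have hK : Measurable (fun t : ℝ => (Kfun A p (max t 0) u) ^ p) :=
    (Real.continuous_rpow_const hp.le).measurable.comp hKmono.measurable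
  have hfrac : ContinuousOn (fun t : ℝ => t ^ (-(s*p)) / t) (Set.Ioi (0:ℝ)) := by
    refine ContinuousOn.div ?_ continuousOn_id ?_
    · exact continuousOn_id.rpow_const fun t ht => Or.inl (ne_of_gt ht)
    · exact fun t ht => ne_of_gt ht
  refine AEStronglyMeasurable.congr
    ((hfrac.aestronglyMeasurable measurableSet_Ioi).mul hK.aestronglyMeasurable) ?_
  filter_upwards [self_mem_ae_restrict measurableSet_Ioi] with t ht
  simp only [Pi.mul_apply]
  rw [max_eq_left (le_of_lt ht)]
  ring

lemma interp_integrable {A : Set (Euc N)} {s p : ℝ} (hp : 1 < p) (hs : s ∈ Set.Ioo (0:ℝ) 1)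
    {u : Euc N → ℝ} (hu : IsTestFn A u) :
    IntegrableOn (fun t : ℝ => t ^ (-(s*p)) * (Kfun A p t u) ^ p / t) (Set.Ioi (0:ℝ)) := by
  have hp0 : (0:ℝ) < p := lt_trans one_pos hp
  have hsp : 0 < s * p := mul_pos hs.1 hp0
  have hasm := interp_aesm A s p hp0 u
  have hsplit : Set.Ioi (0:ℝ) = Set.Ioc (0:ℝ) 1 ∪ Set.Ioi 1 :=
    (Set.Ioc_union_Ioi_eq_Ioi zero_le_one).symm
  rw [hsplit]
  set B := gradLpNorm p u with hB
  set Anorm := lpNorm p u with hA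
  refine IntegrableOn.union ?_ ?_
  · -- on (0,1]
    have hmaj : IntegrableOn (fun t : ℝ => B ^ p * t ^ ((1-s)*p - 1)) (Set.Ioc (0:ℝ) 1) := by
      have h1 : IntervalIntegrable (fun t : ℝ => t ^ ((1-s)*p - 1)) volume 0 1 :=
        intervalIntegral.intervalIntegrable_rpow' (by nlinarith [hs.2])
      have := (intervalIntegrable_iff_integrableOn_Ioc_of_le (zero_le_one)).mp h1
      exact this.const_mul _
    refine Integrable.mono hmaj
      (hasm.mono_measure (Measure.restrict_mono (by rw [hsplit]; exact Set.subset_union_left) le_rfl)) ?_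
    filter_upwards [self_mem_ae_restrict measurableSet_Ioc] with t ht
    obtain ⟨ht0, ht1⟩ := ht
    have hKnn : 0 ≤ Kfun A p t u := Kfun_nonneg ht0.le
    have hKle : Kfun A p t u ≤ t * B := Kfun_le_grad (ne_of_gt hp0) ht0.le hu
    have hfnn : 0 ≤ t ^ (-(s*p)) * (Kfun A p t u) ^ p / t :=
      div_nonneg (mul_nonneg (Real.rpow_nonneg ht0.le _) (Real.rpow_nonneg hKnn _)) ht0.le
    rw [Real.norm_eq_abs, abs_of_nonneg hfnn]
    have key : t ^ (-(s*p)) * (t * B) ^ p / t = B ^ p * t ^ ((1-s)*p - 1) := by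
      have hBnn : 0 ≤ B := gradLpNorm_nonneg _ _
      rw [Real.mul_rpow ht0.le hBnn, div_eq_mul_inv, ← Real.rpow_neg_one t]
      rw [show t ^ (-(s*p)) * (t ^ p * B ^ p) * t ^ (-1:ℝ)
            = B ^ p * (t ^ (-(s*p)) * t ^ p * t ^ (-1:ℝ)) by ring]
      rw [← Real.rpow_add ht0, ← Real.rpow_add ht0]
      ring_nf
    calc t ^ (-(s*p)) * (Kfun A p t u) ^ p / t
        ≤ t ^ (-(s*p)) * (t * B) ^ p / t := by
          apply div_le_div_of_nonneg_right ?_ ht0.le |>.trans le_rfl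
          · exact mul_le_mul_of_nonneg_left
              (Real.rpow_le_rpow hKnn hKle hp0.le) (Real.rpow_nonneg ht0.le _)
      _ = B ^ p * t ^ ((1-s)*p - 1) := key
      _ ≤ ‖B ^ p * t ^ ((1-s)*p - 1)‖ := le_abs_self _
  · -- on (1,∞)
    have hmaj : IntegrableOn (fun t : ℝ => Anorm ^ p * t ^ (-(s*p) - 1)) (Set.Ioi (1:ℝ)) := by
      have h1 : IntegrableOn (fun t : ℝ => t ^ (-(s*p) - 1)) (Set.Ioi (1:ℝ)) :=
        integrableOn_Ioi_rpow_of_lt (by linarith) one_pos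
      exact h1.const_mul _
    refine Integrable.mono hmaj
      (hasm.mono_measure (Measure.restrict_mono (by rw [hsplit]; exact Set.subset_union_right) le_rfl)) ?_
    filter_upwards [self_mem_ae_restrict measurableSet_Ioi] with t ht
    have ht0 : (0:ℝ) < t := lt_trans one_pos ht
    have hKnn : 0 ≤ Kfun A p t u := Kfun_nonneg ht0.le
    have hKle : Kfun A p t u ≤ Anorm := Kfun_le_lpNorm (ne_of_gt hp0) ht0.le
    have hfnn : 0 ≤ t ^ (-(s*p)) * (Kfun A p t u) ^ p / t :=
      div_nonneg (mul_nonneg (Real.rpow_nonneg ht0.le _) (Real.rpow_nonneg hKnn _)) ht0.le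
    rw [Real.norm_eq_abs, abs_of_nonneg hfnn]
    have key : t ^ (-(s*p)) * Anorm ^ p / t = Anorm ^ p * t ^ (-(s*p) - 1) := by
      rw [div_eq_mul_inv, ← Real.rpow_neg_one t]
      rw [show t ^ (-(s*p)) * Anorm ^ p * t ^ (-1:ℝ)
            = Anorm ^ p * (t ^ (-(s*p)) * t ^ (-1:ℝ)) by ring]
      rw [← Real.rpow_add ht0]
      ring_nf
    calc t ^ (-(s*p)) * (Kfun A p t u) ^ p / t
        ≤ t ^ (-(s*p)) * Anorm ^ p / t := by
          apply div_le_div_of_nonneg_right ?_ ht0.le |>.trans le_rfl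
          · exact mul_le_mul_of_nonneg_left
              (Real.rpow_le_rpow hKnn hKle hp0.le) (Real.rpow_nonneg ht0.le _)
      _ = Anorm ^ p * t ^ (-(s*p) - 1) := key
      _ ≤ ‖Anorm ^ p * t ^ (-(s*p) - 1)‖ := le_abs_self _

end Aux

/-- Comparison of norms on convex cones: if the interpolation norm on each truncation
`Ω ∩ B_R(x₀)` is controlled by the Gagliardo seminorm with a constant depending only on
`N`, `p` and the eccentricity, then the same holds on `Ω` with the constant of the unit
truncation; the eccentricity of the truncations is independent of `R`. -/
theorem cone_comparison {N : ℕ} (p s : ℝ) (hp : 1 < p) (hs : s ∈ Set.Ioo (0:ℝ) 1)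
    (Ω : Set (Euc N)) (hΩ : IsOpen Ω) (hconv : Convex ℝ Ω) (x₀ : Euc N)
    (hcone : ∀ x ∈ Ω, ∀ τ : ℝ, 0 < τ → x₀ + τ • (x - x₀) ∈ Ω)
    (C : ℕ → ℝ → ℝ → ℝ)
    (H : ∀ R > 0, ∀ u : Euc N → ℝ, IsTestFn (Ω ∩ Metric.ball x₀ R) u →
      interpNormP (Ω ∩ Metric.ball x₀ R) s p u ≤
        C N p (ecc (Ω ∩ Metric.ball x₀ R)) * gagliardo s p u) :
    (∀ R > 0, ecc (Ω ∩ Metric.ball x₀ R) = ecc (Ω ∩ Metric.ball x₀ 1)) ∧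
    ∀ u : Euc N → ℝ, IsTestFn Ω u →
      interpNormP Ω s p u ≤ C N p (ecc (Ω ∩ Metric.ball x₀ 1)) * gagliardo s p u := by
  -- the homothety with center `x₀` and ratio `R`
  set h : ℝ → Euc N → Euc N := fun R x => x₀ + R • (x - x₀) with hh
  have hfix : ∀ R : ℝ, h R x₀ = x₀ := by intro R; simp [hh]
  have hdist : ∀ (R : ℝ) (x y : Euc N), dist (h R x) (h R y) = |R| * dist x y := by
    intro R x y
    rw [dist_eq_norm, dist_eq_norm]
    have : h R x - h R y = R • (x - y) := by simp only [hh]; module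
    rw [this, norm_smul, Real.norm_eq_abs]
  have hRinv : ∀ (R : ℝ), R ≠ 0 → ∀ x : Euc N, h R (h R⁻¹ x) = x := by
    intro R hR x
    simp only [hh]
    rw [add_sub_cancel_left, smul_smul, mul_inv_cancel₀ hR, one_smul]
    abel
  have hRinv' : ∀ (R : ℝ), R ≠ 0 → ∀ x : Euc N, h R⁻¹ (h R x) = x := by
    intro R hR x
    have := hRinv R⁻¹ (inv_ne_zero hR) x
    rwa [inv_inv] at this
  have hmem : ∀ R : ℝ, 0 < R → ∀ x : Euc N, (h R x ∈ Ω ↔ x ∈ Ω) := by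
    intro R hR x
    constructor
    · intro hx
      have := hcone (h R x) hx R⁻¹ (inv_pos.mpr hR)
      have heq : x₀ + R⁻¹ • (h R x - x₀) = x := hRinv' R (ne_of_gt hR) x
      rwa [heq] at this
    · intro hx
      exact hcone x hx R hR
  have himgΩ : ∀ R : ℝ, 0 < R → h R '' Ω = Ω := by
    intro R hR
    ext y
    constructor
    · rintro ⟨x, hx, rfl⟩
      exact (hmem R hR x).mpr hx
    · intro hy
      refine ⟨h R⁻¹ y, ?_, hRinv R (ne_of_gt hR) y⟩
      exact (hmem R⁻¹ (inv_pos.mpr hR) y).mpr hy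
  have hball : ∀ R : ℝ, 0 < R → ∀ (c : Euc N) (r : ℝ),
      h R '' Metric.ball c r = Metric.ball (h R c) (R * r) := by
    intro R hR c r
    ext y
    simp only [Set.mem_image, Metric.mem_ball]
    constructor
    · rintro ⟨x, hx, rfl⟩
      rw [hdist, abs_of_pos hR]
      exact mul_lt_mul_of_pos_left hx hR
    · intro hy
      refine ⟨h R⁻¹ y, ?_, hRinv R (ne_of_gt hR) y⟩
      have : c = h R⁻¹ (h R c) := (hRinv' R (ne_of_gt hR) c).symm
      rw [this, hdist, abs_of_pos (inv_pos.mpr hR)]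
      calc R⁻¹ * dist y (h R c) < R⁻¹ * (R * r) :=
            mul_lt_mul_of_pos_left hy (inv_pos.mpr hR)
        _ = r := by field_simp
  have hinj : ∀ R : ℝ, 0 < R → Function.Injective (h R) := by
    intro R hR
    exact Function.LeftInverse.injective (fun x => hRinv' R (ne_of_gt hR) x)
  have himgset : ∀ R : ℝ, 0 < R →
      h R '' (Ω ∩ Metric.ball x₀ 1) = Ω ∩ Metric.ball x₀ R := by
    intro R hR
    rw [Set.image_inter (hinj R hR), himgΩ R hR, hball R hR, hfix, mul_one]
  have himg_id : ∀ R : ℝ, 0 < R → ∀ A : Set (Euc N), h R⁻¹ '' (h R '' A) = A := by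
    intro R hR A
    rw [Set.image_image]
    rw [show (fun x => h R⁻¹ (h R x)) = id from funext (hRinv' R (ne_of_gt hR))]
    exact Set.image_id A
  have hbdd_img : ∀ R : ℝ, 0 < R → ∀ A : Set (Euc N), Bornology.IsBounded A →
      Bornology.IsBounded (h R '' A) := by
    intro R hR A hA
    obtain ⟨r, hr⟩ := hA.subset_ball x₀
    have hsub : h R '' A ⊆ Metric.ball (h R x₀) (R * r) := by
      rw [← hball R hR]
      exact Set.image_mono hr
    exact Metric.isBounded_ball.subset hsub
  have hdiam_le : ∀ R : ℝ, 0 < R → ∀ A : Set (Euc N), Bornology.IsBounded A →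
      Metric.diam (h R '' A) ≤ R * Metric.diam A := by
    intro R hR A hA
    refine Metric.diam_le_of_forall_dist_le (mul_nonneg hR.le Metric.diam_nonneg) ?_
    rintro _ ⟨x, hx, rfl⟩ _ ⟨y, hy, rfl⟩
    rw [hdist, abs_of_pos hR]
    exact mul_le_mul_of_nonneg_left (Metric.dist_le_diam_of_mem hA hx hy) hR.le
  have hdiam : ∀ R : ℝ, 0 < R → ∀ A : Set (Euc N), Bornology.IsBounded A →
      Metric.diam (h R '' A) = R * Metric.diam A := by
    intro R hR A hA
    refine le_antisymm (hdiam_le R hR A hA) ?_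
    have h1 : Metric.diam A ≤ R⁻¹ * Metric.diam (h R '' A) := by
      have := hdiam_le R⁻¹ (inv_pos.mpr hR) (h R '' A) (hbdd_img R hR A hA)
      rwa [himg_id R hR A] at this
    calc R * Metric.diam A ≤ R * (R⁻¹ * Metric.diam (h R '' A)) :=
          mul_le_mul_of_nonneg_left h1 hR.le
      _ = Metric.diam (h R '' A) := by field_simp
  have hinrad : ∀ R : ℝ, 0 < R → ∀ A : Set (Euc N),
      inrad (h R '' A) = R * inrad A := by
    intro R hR A
    have hset : {r : ℝ | ∃ x, Metric.ball x r ⊆ h R '' A}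
        = R • {r : ℝ | ∃ x, Metric.ball x r ⊆ A} := by
      ext r
      simp only [Set.mem_setOf_eq, Set.mem_smul_set, smul_eq_mul]
      constructor
      · rintro ⟨x, hx⟩
        refine ⟨R⁻¹ * r, ⟨h R⁻¹ x, ?_⟩, by field_simp⟩
        have h2 : h R⁻¹ '' Metric.ball x r ⊆ h R⁻¹ '' (h R '' A) := Set.image_mono hx
        rwa [himg_id R hR A, hball R⁻¹ (inv_pos.mpr hR)] at h2
      · rintro ⟨r', ⟨x, hx⟩, rfl⟩
        refine ⟨h R x, ?_⟩
        rw [← hball R hR]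
        exact Set.image_mono hx
    rw [inrad, inrad, hset, Real.sSup_smul_of_nonneg hR.le, smul_eq_mul]
  have hecc : ∀ R : ℝ, 0 < R → ∀ A : Set (Euc N), Bornology.IsBounded A →
      ecc (h R '' A) = ecc A := by
    intro R hR A hA
    rw [ecc, ecc, hdiam R hR A hA, hinrad R hR A]
    rw [show 2 * (R * inrad A) = R * (2 * inrad A) by ring]
    exact mul_div_mul_left _ _ (ne_of_gt hR)
  have hbdd1 : Bornology.IsBounded (Ω ∩ Metric.ball x₀ 1) :=
    Metric.isBounded_ball.subset Set.inter_subset_right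
  have part1 : ∀ R > 0, ecc (Ω ∩ Metric.ball x₀ R) = ecc (Ω ∩ Metric.ball x₀ 1) := by
    intro R hR
    rw [← himgset R hR]
    exact hecc R hR _ hbdd1
  refine ⟨part1, ?_⟩
  intro u hu
  have hp0 : (0:ℝ) < p := lt_trans one_pos hp
  obtain ⟨r, hr⟩ := hu.2.1.isBounded.subset_ball x₀
  set R := max r 1 with hRdef
  have hR : (0:ℝ) < R := lt_of_lt_of_le one_pos (le_max_right _ _)
  have hu' : IsTestFn (Ω ∩ Metric.ball x₀ R) u :=
    ⟨hu.1, hu.2.1, Set.subset_inter hu.2.2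
      (hr.trans (Metric.ball_subset_ball (le_max_left _ _)))⟩
  have h2 := H R hR u hu'
  rw [part1 R hR] at h2
  refine le_trans ?_ h2
  -- monotonicity of the interpolation norm in the domain
  have hint2 := interp_integrable hp hs hu'
  have hptwise : ∀ t ∈ Set.Ioi (0:ℝ),
      t ^ (-(s*p)) * (Kfun Ω p t u) ^ p / t
        ≤ t ^ (-(s*p)) * (Kfun (Ω ∩ Metric.ball x₀ R) p t u) ^ p / t := by
    intro t ht
    have ht0 : (0:ℝ) < t := ht
    refine div_le_div_of_nonneg_right ?_ ht0.le |>.trans le_rfl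
    refine mul_le_mul_of_nonneg_left ?_ (Real.rpow_nonneg ht0.le _)
    exact Real.rpow_le_rpow (Kfun_nonneg ht0.le)
      (Kfun_anti_set Set.inter_subset_left ht0.le) hp0.le
  have hint1 : IntegrableOn (fun t : ℝ => t ^ (-(s*p)) * (Kfun Ω p t u) ^ p / t)
      (Set.Ioi (0:ℝ)) := by
    refine Integrable.mono hint2 (interp_aesm Ω s p hp0 u) ?_
    filter_upwards [self_mem_ae_restrict measurableSet_Ioi] with t ht
    have ht0 : (0:ℝ) < t := ht
    have hfnn : 0 ≤ t ^ (-(s*p)) * (Kfun Ω p t u) ^ p / t :=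
      div_nonneg (mul_nonneg (Real.rpow_nonneg ht0.le _)
        (Real.rpow_nonneg (Kfun_nonneg ht0.le) _)) ht0.le
    rw [Real.norm_eq_abs, abs_of_nonneg hfnn]
    exact (hptwise t ht).trans (le_abs_self _)
  exact setIntegral_mono_on hint1 hint2 measurableSet_Ioi hptwise
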